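/- Two k-colorings f and g of a graph G are Kempe equivalent if and only if x_f − x_g belongs to the ideal ⟨[I_G]₂⟩ generated by all quadratic binomials of the toric ideal I_G. -/

import Mathlib

open MvPolynomial

section KempePrelim

variable {V : Type} 

/-- A proper `k`-coloring. -/
def IsColoring (G : SimpleGraph V) (k : ℕ) (f : V → Fin k) : Prop :=
  ∀ ⦃u v : V⦄, G.Adj u v → f u ≠ f v

/-- `g` is obtained from `f` by a Kempe switching: swap colors `i` and `j` on
one connected component of the subgraph induced on `f⁻¹(i) ∪ f⁻¹(j)`. -/
def KempeSwitch (G : SimpleGraph V) {k : ℕ} (f g : V → Fin k) : Prop :=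
  ∃ i j : Fin k, ∃ C : Set V,
    (∃ comp : (G.induce {v | f v = i ∨ f v = j}).ConnectedComponent,
      C = Subtype.val '' comp.supp) ∧
    (∀ v ∈ C, (f v = i → g v = j) ∧ (f v = j → g v = i)) ∧
    (∀ v ∉ C, g v = f v)

/-- A single step of Kempe equivalence between proper `k`-colorings. -/
def KempeStep (G : SimpleGraph V) {k : ℕ} (f g : V → Fin k) : Prop :=
  IsColoring G k f ∧ IsColoring G k g ∧ KempeSwitch G f g

/-- Kempe equivalence of `k`-colorings. -/
def KempeEquiv (G : SimpleGraph V) {k : ℕ} (f g : V → Fin k) : Prop :=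
  Relation.ReflTransGen (KempeStep G) f g

/-- The type of proper `k`-colorings of `G`. -/
def ProperColoring (G : SimpleGraph V) (k : ℕ) : Type _ :=
  {f : V → Fin k // IsColoring G k f}

/-- The number of Kempe classes of `k`-colorings of `G`. -/
noncomputable def Kc (G : SimpleGraph V) (k : ℕ) : ℕ :=
  Nat.card (Quot (fun f g : ProperColoring G k => KempeEquiv G f.1 g.1))

/-- The stable (independent) sets of `G`, as a type indexing variables. -/
def StableSet (G : SimpleGraph V) : Type _ :=
  {s : Finset V // ∀ ⦃i⦄, i ∈ s → ∀ ⦃j⦄, j ∈ s → ¬ G.Adj i j}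

def emptyStable (G : SimpleGraph V) : StableSet G :=
  ⟨∅, by intro i hi; simp at hi⟩

def singleStable (G : SimpleGraph V) (i : V) : StableSet G :=
  ⟨{i}, by
    intro a ha b hb
    simp only [Finset.mem_singleton] at ha hb
    rw [ha, hb]
    exact fun h => G.ne_of_adj h rfl⟩

def eraseStable (G : SimpleGraph V) [DecidableEq V] (S : StableSet G) (i : V) : StableSet G :=
  ⟨S.1.erase i, fun _ ha _ hb => S.2 (Finset.mem_of_mem_erase ha) (Finset.mem_of_mem_erase hb)⟩

variable (K : Type) [Field K]

/-- The monoid algebra map `x_S ↦ t^{ρ(S)} s`, into `K[t₁,…,t_d,s]`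
(realized as `MvPolynomial (Option V) K`, with `none` playing the role of `s`). -/
noncomputable def piMap (G : SimpleGraph V) :
    MvPolynomial (StableSet G) K →ₐ[K] MvPolynomial (Option V) K :=
  aeval fun S : StableSet G => (∏ i ∈ S.1, X (some i)) * X (none : Option V)

/-- The toric ideal `I_G` of the stable set ring. -/
noncomputable def toricIdeal (G : SimpleGraph V) : Ideal (MvPolynomial (StableSet G) K) :=
  RingHom.ker (piMap K G).toRingHom

/-- The ideal `L_G`. -/
noncomputable def idealL (G : SimpleGraph V) [DecidableEq V] :
    Ideal (MvPolynomial (StableSet G) K) :=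
  Ideal.span {p | ∃ (S : StableSet G) (i : V), i ∈ S.1 ∧ 2 ≤ S.1.card ∧
    p = X (eraseStable G S i) * X (singleStable G i) - X S * X (emptyStable G)}

/-- The 2-coloring ideal `J_G`. -/
noncomputable def idealJ (G : SimpleGraph V) [DecidableEq V] :
    Ideal (MvPolynomial (StableSet G) K) :=
  Ideal.span {p | ∃ S₁ S₂ S₃ S₄ : StableSet G,
    Disjoint S₁.1 S₂.1 ∧ Disjoint S₃.1 S₄.1 ∧ S₁.1 ∪ S₂.1 = S₃.1 ∪ S₄.1 ∧
    p = X S₁ * X S₂ - X S₃ * X S₄}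

/-- The ideal `⟨[I_G]₂⟩` generated by all quadratic binomials of `I_G`. -/
noncomputable def quadPart (G : SimpleGraph V) : Ideal (MvPolynomial (StableSet G) K) :=
  Ideal.span {p | (∃ S₁ S₂ S₃ S₄ : StableSet G, p = X S₁ * X S₂ - X S₃ * X S₄) ∧
    p ∈ toricIdeal K G}

/-- The monomial ideal `M_G`. -/
noncomputable def idealM (G : SimpleGraph V) [DecidableEq V] :
    Ideal (MvPolynomial (StableSet G) K) :=
  Ideal.span {p | ∃ S T : StableSet G, (S.1 ∩ T.1).Nonempty ∧ p = X S * X T}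

/-- The Kempe ideal `K_G = J_G + M_G`. -/
noncomputable def kempeIdeal (G : SimpleGraph V) [DecidableEq V] :
    Ideal (MvPolynomial (StableSet G) K) :=
  idealJ K G + idealM K G

/-- The color class of a proper coloring, as a stable set. -/
def colorClass (G : SimpleGraph V) [Fintype V] [DecidableEq V] {k : ℕ}
    (f : V → Fin k) (hf : IsColoring G k f) (c : Fin k) : StableSet G :=
  ⟨Finset.univ.filter (fun v => f v = c), by
    intro a ha b hb hadj
    simp only [Finset.mem_filter] at ha hb
    exact hf hadj (ha.2.trans hb.2.symm)⟩

/-- The monomial `x_f` associated with a proper `k`-coloring `f`. -/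
noncomputable def xMonomial (G : SimpleGraph V) [Fintype V] [DecidableEq V] {k : ℕ}
    (f : V → Fin k) (hf : IsColoring G k f) : MvPolynomial (StableSet G) K :=
  ∏ c : Fin k, X (colorClass G f hf c)

/-- The Hilbert function `k ↦ dim_K (R/I)_k` of a quotient of `R[G]`. -/
noncomputable def hilbertFn (G : SimpleGraph V)
    (I : Ideal (MvPolynomial (StableSet G) K)) (k : ℕ) : ℕ :=
  Module.finrank K (Submodule.map (Ideal.Quotient.mkₐ K I).toLinearMap
    (homogeneousSubmodule (StableSet G) K k))

end KempePrelim

/-!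
A Kempe switch in colours `a`, `b` replaces the classes `S₁`, `S₂` of `a` and `b` by two disjoint
stable sets `S₃`, `S₄` with the same union and keeps the other classes, so `x_f - x_g` is a
multiple of the binomial `x_{S₁} x_{S₂} - x_{S₃} x_{S₄}` of `I_G`.

Conversely, `⟨[I_G]₂⟩` is killed by the map `x_S ↦ [{S}]` into the monoid algebra of multisets
of stable sets modulo the moves `{S₁, S₂} ↦ {S₃, S₄}` with `S₁ + S₂ = S₃ + S₄` as multisets of
vertices. Hence the colour classes of `f` and `g` are joined by a chain of such moves. A move
applied to the classes of a colouring recolours it inside two colours, and two colourings that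
differ only inside two colours are joined by Kempe switches, one component at a time. At the end
of the chain the colourings have the same classes up to a permutation of the colours, and a
permutation is a product of transpositions, each of which is a recolouring inside two colours.
-/

section ToricIdeal

variable {V : Type} {G : SimpleGraph V} (K : Type) [Field K]

noncomputable def stableExponent (S : StableSet G) : Option V →₀ ℕ :=
  ∑ i ∈ S.1, Finsupp.single (some i) 1 + Finsupp.single none 1

lemma piMap_X (S : StableSet G) : piMap K G (X S) = monomial (stableExponent S) 1 := by
  rw [piMap, aeval_X, stableExponent, monomial_add_single, monomial_sum_one, pow_one]
  rfl

lemma toMultiset_stableExponent (S : StableSet G) :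
    Finsupp.toMultiset (stableExponent S) = none ::ₘ S.1.val.map some := by
  simp only [stableExponent, map_add, map_sum, Finsupp.toMultiset_single, one_nsmul]
  rw [add_comm, Multiset.singleton_add, ← Multiset.sum_map_singleton (S.1.val.map some),
    Multiset.map_map]
  rfl

lemma X_mul_X_sub_X_mul_X_mem_toricIdeal_iff {S₁ S₂ S₃ S₄ : StableSet G} :
    X S₁ * X S₂ - X S₃ * X S₄ ∈ toricIdeal K G ↔ S₁.1.val + S₂.1.val = S₃.1.val + S₄.1.val := by
  have hinj : Function.Injective (Finsupp.toMultiset : (Option V →₀ ℕ) → Multiset (Option V)) := by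
    classical exact Function.LeftInverse.injective Finsupp.toMultiset_toFinsupp
  rw [toricIdeal, RingHom.mem_ker, AlgHom.toRingHom_eq_coe, RingHom.coe_coe, map_sub, sub_eq_zero,
    map_mul, map_mul, piMap_X, piMap_X, piMap_X, piMap_X, monomial_mul, monomial_mul, one_mul,
    monomial_left_inj one_ne_zero, ← hinj.eq_iff, map_add, map_add,
    toMultiset_stableExponent, toMultiset_stableExponent, toMultiset_stableExponent,
    toMultiset_stableExponent]
  simp [← Multiset.map_add, (Multiset.map_injective (Option.some_injective V)).eq_iff]

end ToricIdeal

lemma Finset.val_add_val_eq_iff_of_disjoint {α : Type*} [DecidableEq α] {s t u v : Finset α}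
    (hst : Disjoint s t) : s.val + t.val = u.val + v.val ↔ Disjoint u v ∧ s ∪ t = u ∪ v := by
  have hval : ∀ {x y : Finset α}, Disjoint x y → x.val + y.val = (x ∪ y).val :=
    fun hxy => congrArg Finset.val (Finset.disjUnion_eq_union _ _ hxy)
  refine ⟨fun h => ?_, fun ⟨huv, h⟩ => by rw [hval hst, hval huv, h]⟩
  have hnodup : (u.val + v.val).Nodup := h ▸ hval hst ▸ (s ∪ t).nodup
  have huv : Disjoint u v := Finset.disjoint_val.mp (Multiset.nodup_add.mp hnodup).2.2
  exact ⟨huv, Finset.val_inj.mp (by rw [← hval hst, ← hval huv, h])⟩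

def AddCon.ofReflTransGen {M : Type*} [AddCommMonoid M] (r : M → M → Prop) [Std.Symm r]
    (hr : ∀ u {a b}, r a b → r (u + a) (u + b)) : AddCon M where
  r := Relation.ReflTransGen r
  iseqv := ⟨fun _ => .refl, fun h => symm_of _ h, .trans⟩
  add' {a b c d} hab hcd :=
    (hab.lift (· + c) fun x y hxy => by simpa only [add_comm _ c] using hr c hxy).trans
      (hcd.lift (b + ·) fun _ _ => hr b)

section QuadMove

variable {V : Type} {G : SimpleGraph V}

def QuadMove (G : SimpleGraph V) (m m' : Multiset (StableSet G)) : Prop :=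
  ∃ w : Multiset (StableSet G), ∃ S₁ S₂ S₃ S₄ : StableSet G,
    S₁.1.val + S₂.1.val = S₃.1.val + S₄.1.val ∧ m = w + ({S₁} + {S₂}) ∧ m' = w + ({S₃} + {S₄})

instance : Std.Symm (QuadMove G) where
  symm _ _ := fun ⟨w, S₁, S₂, S₃, S₄, h, hm, hm'⟩ => ⟨w, S₃, S₄, S₁, S₂, h.symm, hm', hm⟩

lemma QuadMove.add_left (u : Multiset (StableSet G)) {m m' : Multiset (StableSet G)}
    (h : QuadMove G m m') : QuadMove G (u + m) (u + m') :=
  let ⟨w, S₁, S₂, S₃, S₄, hS, hm, hm'⟩ := h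
  ⟨u + w, S₁, S₂, S₃, S₄, hS, by rw [hm, add_assoc], by rw [hm', add_assoc]⟩

def quadMoveCon (G : SimpleGraph V) : AddCon (Multiset (StableSet G)) :=
  AddCon.ofReflTransGen (QuadMove G) QuadMove.add_left

variable (K : Type) [Field K]

noncomputable def toQuadMoveQuotient (G : SimpleGraph V) :
    MvPolynomial (StableSet G) K →ₐ[K] AddMonoidAlgebra K (quadMoveCon G).Quotient :=
  aeval fun S => AddMonoidAlgebra.single ((quadMoveCon G).mk' {S}) 1

lemma toQuadMoveQuotient_prod_X {ι : Type*} (s : Finset ι) (F : ι → StableSet G) :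
    toQuadMoveQuotient K G (∏ i ∈ s, X (F i))
      = AddMonoidAlgebra.single ((quadMoveCon G).mk' (∑ i ∈ s, {F i})) 1 := by
  simp [toQuadMoveQuotient, map_prod, map_sum]

lemma quadPart_le_ker_toQuadMoveQuotient :
    quadPart K G ≤ RingHom.ker (toQuadMoveQuotient K G) := by
  rw [quadPart, Ideal.span_le]
  rintro _ ⟨⟨S₁, S₂, S₃, S₄, rfl⟩, hmem⟩
  have hmove : QuadMove G ({S₁} + {S₂}) ({S₃} + {S₄}) :=
    ⟨0, S₁, S₂, S₃, S₄, (X_mul_X_sub_X_mul_X_mem_toricIdeal_iff K).mp hmem, (zero_add _).symm,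
      (zero_add _).symm⟩
  have hcon : (quadMoveCon G).mk' ({S₁} + {S₂}) = (quadMoveCon G).mk' ({S₃} + {S₄}) :=
    (AddCon.eq _).mpr (.single hmove)
  simp only [SetLike.mem_coe, RingHom.mem_ker, map_sub, toQuadMoveQuotient, map_mul, aeval_X,
    AddMonoidAlgebra.single_mul_single, ← map_add, mul_one]
  rw [hcon, sub_self]

end QuadMove

lemma Equiv.eq_swap_apply_of_ne {α : Type*} [DecidableEq α] {a b x y : α} (hx : x = a ∨ x = b)
    (hy : y = a ∨ y = b) (hxy : x ≠ y) : y = Equiv.swap a b x := by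
  rcases hx with rfl | rfl <;> rcases hy with rfl | rfl <;> simp_all

section Recoloring

variable {V : Type} {G : SimpleGraph V} {k : ℕ}

lemma IsColoring.comp_injective {f : V → Fin k} (hf : IsColoring G k f) {σ : Fin k → Fin k}
    (hσ : σ.Injective) : IsColoring G k (σ ∘ f) :=
  fun _ _ huv h => hf huv (hσ h)

def IsTwoColorRecoloring (a b : Fin k) (f g : V → Fin k) : Prop :=
  ∀ v, g v = f v ∨ g v = Equiv.swap a b (f v)

lemma KempeSwitch.exists_isTwoColorRecoloring {f g : V → Fin k} (h : KempeSwitch G f g) :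
    ∃ a b, IsTwoColorRecoloring a b f g := by
  obtain ⟨a, b, C, ⟨comp, rfl⟩, hswap, hout⟩ := h
  refine ⟨a, b, fun v => ?_⟩
  by_cases hv : v ∈ Subtype.val '' comp.supp
  · have hfv : f v = a ∨ f v = b := by
      obtain ⟨u, -, rfl⟩ := hv
      exact u.2
    right
    rcases hfv with hfv | hfv
    · rw [(hswap v hv).1 hfv, hfv, Equiv.swap_apply_left]
    · rw [(hswap v hv).2 hfv, hfv, Equiv.swap_apply_right]
  · exact Or.inl (hout v hv)

lemma IsTwoColorRecoloring.isColoring (h : IsTwoColorRecoloring a b f g) (hf : IsColoring G k f)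
    (ha : ∀ ⦃u w⦄, G.Adj u w → g u = a → g w ≠ a) (hb : ∀ ⦃u w⦄, G.Adj u w → g u = b → g w ≠ b) :
    IsColoring G k g := by
  have hoff : ∀ v, g v ≠ a → g v ≠ b → g v = f v := fun v hva hvb => by
    rcases h v with hv | hv
    · exact hv
    · rw [← Equiv.swap_apply_of_ne_of_ne hva hvb, hv, Equiv.swap_apply_self]
  intro u w huw heq
  by_cases hua : g u = a
  · exact ha huw hua (heq ▸ hua)
  by_cases hub : g u = b
  · exact hb huw hub (heq ▸ hub)
  exact hf huw (by rw [← hoff u hua hub, ← hoff w (heq ▸ hua) (heq ▸ hub), heq])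

def kempeComponent (G : SimpleGraph V) (f : V → Fin k) (a b : Fin k) (v : V)
    (hv : f v = a ∨ f v = b) : Set V :=
  Subtype.val '' ((G.induce {u | f u = a ∨ f u = b}).connectedComponentMk ⟨v, hv⟩).supp

open Classical in
noncomputable def kempeSwitchOn (f : V → Fin k) (a b : Fin k) (C : Set V) : V → Fin k :=
  fun v => if v ∈ C then Equiv.swap a b (f v) else f v

variable {f g : V → Fin k} {a b : Fin k} {v₀ : V} {h₀ : f v₀ = a ∨ f v₀ = b}

lemma self_mem_kempeComponent : v₀ ∈ kempeComponent G f a b v₀ h₀ :=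
  ⟨⟨v₀, h₀⟩, rfl, rfl⟩

lemma eq_or_eq_of_mem_kempeComponent {v : V} (hv : v ∈ kempeComponent G f a b v₀ h₀) :
    f v = a ∨ f v = b := by
  obtain ⟨u, -, rfl⟩ := hv
  exact u.2

lemma mem_kempeComponent_of_adj {u w : V} (hu : u ∈ kempeComponent G f a b v₀ h₀)
    (hw : f w = a ∨ f w = b) (huw : G.Adj u w) : w ∈ kempeComponent G f a b v₀ h₀ := by
  obtain ⟨u, hu, rfl⟩ := hu
  refine ⟨⟨w, hw⟩, ?_, rfl⟩
  rw [SimpleGraph.ConnectedComponent.mem_supp_iff] at hu ⊢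
  rw [← hu]
  exact SimpleGraph.ConnectedComponent.sound (SimpleGraph.Adj.reachable huw.symm)

lemma kempeSwitchOn_of_mem {C : Set V} {v : V} (hv : v ∈ C) :
    kempeSwitchOn f a b C v = Equiv.swap a b (f v) := by
  simp [kempeSwitchOn, hv]

lemma kempeSwitchOn_of_notMem {C : Set V} {v : V} (hv : v ∉ C) :
    kempeSwitchOn f a b C v = f v := by
  simp [kempeSwitchOn, hv]

lemma IsColoring.kempeStep_kempeSwitchOn (hf : IsColoring G k f) :
    KempeStep G f (kempeSwitchOn f a b (kempeComponent G f a b v₀ h₀)) := by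
  set C := kempeComponent G f a b v₀ h₀
  have hswap_mem : ∀ v, f v = a ∨ f v = b → Equiv.swap a b (f v) = a ∨ Equiv.swap a b (f v) = b :=
    fun v hv => by rcases hv with hv | hv <;> simp [hv]
  refine ⟨hf, fun u w huw heq => ?_, a, b, C, ⟨_, rfl⟩, fun v hv => ?_, fun v hv => ?_⟩
  · by_cases hu : u ∈ C <;> by_cases hw : w ∈ C <;>
      simp only [kempeSwitchOn_of_mem, kempeSwitchOn_of_notMem, hu, hw, not_false_eq_true] at heq
    · exact hf huw ((Equiv.swap a b).injective heq)
    · exact hw (mem_kempeComponent_of_adj hu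
        (heq ▸ hswap_mem u (eq_or_eq_of_mem_kempeComponent hu)) huw)
    · exact hu (mem_kempeComponent_of_adj hw
        (heq ▸ hswap_mem w (eq_or_eq_of_mem_kempeComponent hw)) huw.symm)
    · exact hf huw heq
  · rw [kempeSwitchOn_of_mem hv]
    exact ⟨fun h => by rw [h, Equiv.swap_apply_left], fun h => by rw [h, Equiv.swap_apply_right]⟩
  · exact kempeSwitchOn_of_notMem hv

lemma IsTwoColorRecoloring.ne_of_mem_kempeComponent (h : IsTwoColorRecoloring a b f g)
    (hf : IsColoring G k f) (hg : IsColoring G k g) (hne : f v₀ ≠ g v₀) {v : V}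
    (hv : v ∈ kempeComponent G f a b v₀ h₀) : f v ≠ g v := by
  obtain ⟨v, hv, rfl⟩ := hv
  rw [SimpleGraph.ConnectedComponent.mem_supp_iff, SimpleGraph.ConnectedComponent.eq,
    SimpleGraph.reachable_iff_reflTransGen] at hv
  induction hv using Relation.ReflTransGen.head_induction_on with
  | refl => exact hne
  | @head x y hxy _ ih =>
    have hgy : g y = Equiv.swap a b (f y) := (h y).resolve_left (Ne.symm ih)
    have hfx : f x = Equiv.swap a b (f y) := Equiv.eq_swap_apply_of_ne y.2 x.2 (hf hxy).symm
    exact fun hx => hg hxy (hx ▸ hfx.trans hgy.symm)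

lemma kempeEquiv_of_isTwoColorRecoloring [Fintype V] (hf : IsColoring G k f)
    (hg : IsColoring G k g) (h : IsTwoColorRecoloring a b f g) : KempeEquiv G f g := by
  classical
  induction hn : (Finset.univ.filter fun v => f v ≠ g v).card using Nat.strong_induction_on
    generalizing f with
  | _ n ih =>
  obtain rfl | ⟨v₀, hv₀⟩ := eq_or_ne f g |>.imp_right Function.ne_iff.mp
  · exact .refl
  have h₀ : f v₀ = a ∨ f v₀ = b := (Equiv.swap_apply_ne_self_iff.mp
    (((h v₀).resolve_left (Ne.symm hv₀)) ▸ Ne.symm hv₀)).2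
  set C := kempeComponent G f a b v₀ h₀
  have hC : ∀ v ∈ C, kempeSwitchOn f a b C v = g v := fun v hv => by
    rw [kempeSwitchOn_of_mem hv]
    exact ((h v).resolve_left (Ne.symm (h.ne_of_mem_kempeComponent hf hg hv₀ hv))).symm
  have hstep : KempeStep G f (kempeSwitchOn f a b C) := hf.kempeStep_kempeSwitchOn
  refine .head hstep (ih _ ?_ hstep.2.1 (fun v => ?_) rfl)
  · rw [← hn]
    refine Finset.card_lt_card ((Finset.ssubset_iff_of_subset fun v => ?_).mpr
      ⟨v₀, by simpa using hv₀, by simpa using hC v₀ self_mem_kempeComponent⟩)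
    simp only [Finset.mem_filter, Finset.mem_univ, true_and]
    intro hv
    rwa [← kempeSwitchOn_of_notMem (f := f) (a := a) (b := b) fun hvC => hv (hC v hvC)]
  · by_cases hv : v ∈ C
    · exact Or.inl (hC v hv).symm
    · rw [kempeSwitchOn_of_notMem hv]
      exact h v

lemma kempeEquiv_perm_comp [Fintype V] (hf : IsColoring G k f) (σ : Equiv.Perm (Fin k)) :
    KempeEquiv G f (σ ∘ f) := by
  induction σ using Equiv.Perm.swap_induction_on with
  | one => exact .refl
  | swap_mul τ a b _ ih =>
    exact ih.trans (kempeEquiv_of_isTwoColorRecoloring (hf.comp_injective τ.injective)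
      (hf.comp_injective (Equiv.swap a b * τ).injective) fun _ => Or.inr rfl)

end Recoloring

section ColorClasses

variable {V : Type} [Fintype V] [DecidableEq V] {G : SimpleGraph V} {k : ℕ}
  {f g : V → Fin k} {a b : Fin k}

@[simp]
lemma mem_colorClass {hf : IsColoring G k f} {c : Fin k} {v : V} :
    v ∈ (colorClass G f hf c).1 ↔ f v = c := by
  simp [colorClass]

lemma disjoint_colorClass (hf : IsColoring G k f) (hab : a ≠ b) :
    Disjoint (colorClass G f hf a).1 (colorClass G f hf b).1 :=
  Finset.disjoint_left.mpr fun _ ha hb =>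
    hab ((mem_colorClass.mp ha).symm.trans (mem_colorClass.mp hb))

variable (hf : IsColoring G k f) (hg : IsColoring G k g)

lemma IsTwoColorRecoloring.colorClass_eq (h : IsTwoColorRecoloring a b f g) {c : Fin k}
    (hca : c ≠ a) (hcb : c ≠ b) : colorClass G g hg c = colorClass G f hf c := by
  refine Subtype.ext (Finset.ext fun v => ?_)
  rw [mem_colorClass, mem_colorClass]
  rcases h v with h | h <;> rw [h]
  rw [Equiv.swap_apply_eq_iff, Equiv.swap_apply_of_ne_of_ne hca hcb]

lemma IsTwoColorRecoloring.colorClass_union_eq (h : IsTwoColorRecoloring a b f g) :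
    (colorClass G f hf a).1 ∪ (colorClass G f hf b).1
      = (colorClass G g hg a).1 ∪ (colorClass G g hg b).1 := by
  ext v
  simp only [Finset.mem_union, mem_colorClass]
  rcases h v with h | h <;> rw [h]
  simp [Equiv.swap_apply_eq_iff, or_comm]

@[to_additive]
lemma IsTwoColorRecoloring.exists_prod_colorClass_eq {M : Type*} [CommMonoid M]
    (h : IsTwoColorRecoloring a b f g) (hab : a ≠ b) (F : StableSet G → M) :
    ∃ r, ∏ c, F (colorClass G f hf c) = r * (F (colorClass G f hf a) * F (colorClass G f hf b))
      ∧ ∏ c, F (colorClass G g hg c) = r * (F (colorClass G g hg a) * F (colorClass G g hg b)) := by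
  refine ⟨∏ c ∈ Finset.univ \ {a, b}, F (colorClass G f hf c), ?_, ?_⟩ <;>
    rw [← Finset.prod_sdiff (Finset.subset_univ {a, b}), Finset.prod_pair hab]
  refine congrArg (· * _) (Finset.prod_congr rfl fun c hc => ?_)
  simp only [Finset.mem_sdiff, Finset.mem_insert, Finset.mem_singleton, not_or] at hc
  rw [h.colorClass_eq hf hg hc.2.1 hc.2.2]

variable (K : Type) [Field K]

lemma IsTwoColorRecoloring.xMonomial_sub_mem_quadPart (h : IsTwoColorRecoloring a b f g) :
    xMonomial K G f hf - xMonomial K G g hg ∈ quadPart K G := by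
  rcases eq_or_ne a b with rfl | hab
  · obtain rfl : g = f := funext fun v => by simpa using h v
    rw [sub_self]
    exact zero_mem _
  obtain ⟨r, hrf, hrg⟩ := h.exists_prod_colorClass_eq hf hg hab (X (R := K))
  have hmem : X (colorClass G f hf a) * X (colorClass G f hf b)
      - X (colorClass G g hg a) * X (colorClass G g hg b) ∈ toricIdeal K G :=
    (X_mul_X_sub_X_mul_X_mem_toricIdeal_iff K).mpr
      ((Finset.val_add_val_eq_iff_of_disjoint (disjoint_colorClass hf hab)).mpr
        ⟨disjoint_colorClass hg hab, h.colorClass_union_eq hf hg⟩)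
  rw [xMonomial, xMonomial, hrf, hrg, ← mul_sub]
  exact Ideal.mul_mem_left _ _ (Ideal.subset_span ⟨⟨_, _, _, _, rfl⟩, hmem⟩)

lemma KempeEquiv.xMonomial_sub_mem_quadPart (h : KempeEquiv G f g) :
    xMonomial K G f hf - xMonomial K G g hg ∈ quadPart K G := by
  induction h with
  | refl => rw [sub_self]; exact zero_mem _
  | tail _ hstep ih =>
    obtain ⟨a, b, hrec⟩ := hstep.2.2.exists_isTwoColorRecoloring
    simpa using add_mem (ih hstep.1) (hrec.xMonomial_sub_mem_quadPart hstep.1 _ K)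

def colorClasses (G : SimpleGraph V) (f : V → Fin k) (hf : IsColoring G k f) :
    Multiset (StableSet G) :=
  ∑ c, {colorClass G f hf c}

lemma exists_perm_of_colorClasses_eq (h : colorClasses G f hf = colorClasses G g hg) :
    ∃ σ : Equiv.Perm (Fin k), g = σ ∘ f := by
  classical
  have hcard : ∀ S, Fintype.card {c // colorClass G f hf c = S}
      = Fintype.card {c // colorClass G g hg c = S} := fun S => by
    simpa [colorClasses, Multiset.count_sum', Multiset.count_singleton, Fintype.card_subtype,
      eq_comm] using congrArg (Multiset.count S) h
  let σ := Equiv.ofFiberEquiv fun S => Fintype.equivOfCardEq (hcard S)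
  have hσ : ∀ c, colorClass G g hg (σ c) = colorClass G f hf c := Equiv.ofFiberEquiv_map _
  refine ⟨σ, funext fun v => (mem_colorClass (hf := hg)).mp ?_⟩
  rw [Function.comp_apply, hσ]
  exact mem_colorClass.mpr rfl

lemma kempeEquiv_of_colorClasses_eq (h : colorClasses G f hf = colorClasses G g hg) :
    KempeEquiv G f g := by
  obtain ⟨σ, rfl⟩ := exists_perm_of_colorClasses_eq hf hg h
  exact kempeEquiv_perm_comp hf σ

lemma exists_isTwoColorRecoloring (hab : a ≠ b) {S T : StableSet G} (hST : Disjoint S.1 T.1)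
    (hU : S.1 ∪ T.1 = (colorClass G f hf a).1 ∪ (colorClass G f hf b).1) :
    ∃ g, ∃ hg : IsColoring G k g, IsTwoColorRecoloring a b f g ∧
      colorClass G g hg a = S ∧ colorClass G g hg b = T := by
  have hU' : ∀ v, v ∈ S.1 ∨ v ∈ T.1 ↔ f v = a ∨ f v = b := fun v => by
    simpa using Finset.ext_iff.mp hU v
  set g := fun v => if f v = a ∨ f v = b then (if v ∈ S.1 then a else b) else f v
  have hga : ∀ v, g v = a ↔ v ∈ S.1 := fun v => by
    by_cases hv : f v = a ∨ f v = b
    · by_cases hS : v ∈ S.1 <;> simp [g, hv, hS, hab.symm]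
    · have hS : v ∉ S.1 := fun hS => hv ((hU' v).mp (Or.inl hS))
      simp_all [g]
  have hgb : ∀ v, g v = b ↔ v ∈ T.1 := fun v => by
    by_cases hv : f v = a ∨ f v = b
    · by_cases hS : v ∈ S.1
      · simp [g, hv, hS, hab, Finset.disjoint_left.mp hST hS]
      · simp [g, hv, hS, ((hU' v).mpr hv).resolve_left hS]
    · have hT : v ∉ T.1 := fun hT => hv ((hU' v).mp (Or.inr hT))
      simp_all [g]
  have hrec : IsTwoColorRecoloring a b f g := fun v => by
    by_cases hv : f v = a ∨ f v = b
    · by_cases hgf : g v = f v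
      · exact Or.inl hgf
      refine Or.inr (Equiv.eq_swap_apply_of_ne hv ?_ (Ne.symm hgf))
      by_cases hS : v ∈ S.1 <;> simp [g, hv, hS]
    · exact Or.inl (if_neg hv)
  have hg : IsColoring G k g := hrec.isColoring hf
    (fun u w huw hu hw => S.2 ((hga u).mp hu) ((hga w).mp hw) huw)
    (fun u w huw hu hw => T.2 ((hgb u).mp hu) ((hgb w).mp hw) huw)
  exact ⟨g, hg, hrec, Subtype.ext (Finset.ext fun v => by rw [mem_colorClass, hga]),
    Subtype.ext (Finset.ext fun v => by rw [mem_colorClass, hgb])⟩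

lemma exists_ne_colorClass_eq_of_colorClasses_eq_add {w : Multiset (StableSet G)}
    {S₁ S₂ : StableSet G} (h : colorClasses G f hf = w + ({S₁} + {S₂})) :
    ∃ a b, a ≠ b ∧ colorClass G f hf a = S₁ ∧ colorClass G f hf b = S₂ := by
  obtain ⟨a, -, ha⟩ := Multiset.mem_sum.mp (h ▸ by simp : S₁ ∈ colorClasses G f hf)
  rw [Multiset.mem_singleton] at ha
  rw [colorClasses, ← Finset.add_sum_erase _ _ (Finset.mem_univ a), ha, add_comm w,
    add_assoc] at h
  have hS₂ : S₂ ∈ ∑ c ∈ Finset.univ.erase a, ({colorClass G f hf c} : Multiset _) := by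
    simp [add_left_cancel h]
  obtain ⟨b, hb, hb'⟩ := Multiset.mem_sum.mp hS₂
  exact ⟨a, b, Ne.symm (Finset.ne_of_mem_erase hb), ha.symm, (Multiset.mem_singleton.mp hb').symm⟩

lemma exists_kempeEquiv_of_quadMove {m : Multiset (StableSet G)}
    (h : QuadMove G (colorClasses G f hf) m) :
    ∃ g, ∃ hg : IsColoring G k g, colorClasses G g hg = m ∧ KempeEquiv G f g := by
  obtain ⟨w, S₁, S₂, S₃, S₄, hval, hm, rfl⟩ := h
  obtain ⟨a, b, hab, rfl, rfl⟩ := exists_ne_colorClass_eq_of_colorClasses_eq_add hf hm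
  obtain ⟨hS, hU⟩ := (Finset.val_add_val_eq_iff_of_disjoint (disjoint_colorClass hf hab)).mp hval
  obtain ⟨g, hg, hrec, rfl, rfl⟩ := exists_isTwoColorRecoloring hf hab hS hU.symm
  obtain ⟨r, hrf, hrg⟩ :=
    hrec.exists_sum_colorClass_eq hf hg hab (fun S => ({S} : Multiset (StableSet G)))
  refine ⟨g, hg, ?_, kempeEquiv_of_isTwoColorRecoloring hf hg hrec⟩
  rw [colorClasses, hrg, add_right_cancel (hrf.symm.trans hm)]

lemma exists_kempeEquiv_of_reflTransGen_quadMove {m : Multiset (StableSet G)}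
    (h : Relation.ReflTransGen (QuadMove G) (colorClasses G f hf) m) :
    ∃ g, ∃ hg : IsColoring G k g, colorClasses G g hg = m ∧ KempeEquiv G f g := by
  induction h with
  | refl => exact ⟨f, hf, rfl, .refl⟩
  | tail _ hmove ih =>
    obtain ⟨g, hg, rfl, hfg⟩ := ih
    obtain ⟨g', hg', rfl, hgg'⟩ := exists_kempeEquiv_of_quadMove hg hmove
    exact ⟨g', hg', rfl, hfg.trans hgg'⟩

lemma kempeEquiv_of_xMonomial_sub_mem_quadPart
    (h : xMonomial K G f hf - xMonomial K G g hg ∈ quadPart K G) : KempeEquiv G f g := by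
  have hker := quadPart_le_ker_toQuadMoveQuotient K h
  rw [RingHom.mem_ker, map_sub, sub_eq_zero, xMonomial, xMonomial, toQuadMoveQuotient_prod_X,
    toQuadMoveQuotient_prod_X] at hker
  obtain ⟨g', hg', hcl, hfg'⟩ := exists_kempeEquiv_of_reflTransGen_quadMove hf
    ((AddCon.eq _).mp (AddMonoidAlgebra.single_left_injective one_ne_zero hker))
  exact hfg'.trans (kempeEquiv_of_colorClasses_eq hg' hg hcl)

end ColorClasses

theorem kempe_equiv_iff_mem_quadPart {d k : ℕ} (G : SimpleGraph (Fin d))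
    (K : Type) [Field K] (f g : Fin d → Fin k)
    (hf : IsColoring G k f) (hg : IsColoring G k g) :
    KempeEquiv G f g ↔ xMonomial K G f hf - xMonomial K G g hg ∈ quadPart K G :=
  ⟨fun h => h.xMonomial_sub_mem_quadPart hf hg K, kempeEquiv_of_xMonomial_sub_mem_quadPart hf hg K⟩
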